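/- Let n ≥ 1 and d ≥ 2 be integers and let G be an (n,d)-Ramanujan graph. For every set X of vertices of G, the number of vertices v ∈ X that have fewer than δ(d) neighbors belonging to X is strictly less than n·d^{-1/8}, where δ(d) = (d^{7/8} − d^{5/8})/2. -/

import Mathlib

open Finset

/-- A simple graph `G` on a finite vertex set of cardinality `n` is `(n,d)`-Ramanujan
if it is `d`-regular and every real vector `x` on the vertices whose coordinates sum
to `0` satisfies `‖Ax‖₂ ≤ 2√(d−1)·‖x‖₂`, where `A` is the adjacency matrix of `G`. -/
def IsRamanujan {V : Type*} [Fintype V] [DecidableEq V] (n d : ℕ)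
    (G : SimpleGraph V) [DecidableRel G.Adj] : Prop :=
  Fintype.card V = n ∧ G.IsRegularOfDegree d ∧
    ∀ x : V → ℝ, (∑ v, x v) = 0 →
      Real.sqrt (∑ v, ((G.adjMatrix ℝ).mulVec x v) ^ 2) ≤
        2 * Real.sqrt ((d : ℝ) - 1) * Real.sqrt (∑ v, (x v) ^ 2)

/-- `δ(d) = (d^{7/8} − d^{5/8})/2`. -/
noncomputable def deltaOf (d : ℕ) : ℝ :=
  ((d : ℝ) ^ (7 / 8 : ℝ) - (d : ℝ) ^ (5 / 8 : ℝ)) / 2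

/-!
Let `B ⊆ X` be the set of bad vertices, `β = |B|/n`, and test the spectral bound on the
centered indicator `x = 𝟙_B − β`, which has `‖x‖² = |B|(1 − β)` and
`(Ax)_v = |N(v) ∩ B| − dβ`. If `β ≥ d^{-1/8}`, then every `v ∈ B` has
`(Ax)_v < δ(d) − d^{7/8} = −c` with `c = (d^{7/8} + d^{5/8})/2`, so
`|B| c² < ‖Ax‖² ≤ 4(d − 1)|B|(1 − β) ≤ 4(d − 1)|B|(1 − d^{-1/8})`. With `t = d^{1/8}` the
right-hand side is at most `|B| c²`, a polynomial inequality in `t ≥ 1`.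
-/

lemma four_mul_pow_eight_sub_one_mul_one_sub_inv_le {t : ℝ} (ht : 1 ≤ t) :
    4 * (t ^ 8 - 1) * (1 - t⁻¹) ≤ ((t ^ 7 + t ^ 5) / 2) ^ 2 := by
  have ht0 : 0 < t := by linarith
  -- in `s = t - 1` the difference is a polynomial with positive coefficients
  have key : 16 * (t ^ 8 - 1) * (t - 1) ≤ t * (t ^ 7 + t ^ 5) ^ 2 := by
    obtain ⟨s, hs, rfl⟩ : ∃ s ≥ 0, t = 1 + s := ⟨t - 1, by linarith, by ring⟩
    rw [← sub_nonneg]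
    ring_nf
    positivity
  calc 4 * (t ^ 8 - 1) * (1 - t⁻¹) = 16 * (t ^ 8 - 1) * (t - 1) / t / 4 := by
        field_simp
        ring
    _ ≤ t * (t ^ 7 + t ^ 5) ^ 2 / t / 4 := by gcongr
    _ = ((t ^ 7 + t ^ 5) / 2) ^ 2 := by
        field_simp
        norm_num

lemma deltaOf_eq (d : ℕ) :
    deltaOf d = (((d : ℝ) ^ (8⁻¹ : ℝ)) ^ 7 - ((d : ℝ) ^ (8⁻¹ : ℝ)) ^ 5) / 2 := by
  simp only [deltaOf, ← Real.rpow_mul_natCast d.cast_nonneg]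
  norm_num

section CenteredIndicator

variable {V : Type*} [Fintype V] [DecidableEq V]

noncomputable def centeredIndicator (B : Finset V) (v : V) : ℝ :=
  (if v ∈ B then 1 else 0) - #B / Fintype.card V

lemma sum_centeredIndicator (B : Finset V) : ∑ v, centeredIndicator B v = 0 := by
  rcases isEmpty_or_nonempty V with hV | hV
  · simp
  simp only [centeredIndicator, sum_sub_distrib, sum_ite_mem, univ_inter, sum_const, nsmul_eq_mul,
    mul_one, card_univ]
  rw [mul_div_cancel₀ _ (Nat.cast_ne_zero.2 Fintype.card_ne_zero), sub_self]

lemma sum_sq_centeredIndicator (B : Finset V) :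
    ∑ v, centeredIndicator B v ^ 2 = #B * (1 - #B / Fintype.card V) := by
  rcases isEmpty_or_nonempty V with hV | hV
  · simp [Finset.eq_empty_of_isEmpty B]
  have hpoint : ∀ v, centeredIndicator B v ^ 2 =
      (if v ∈ B then 1 else 0) * (1 - 2 * (#B / Fintype.card V)) +
        (#B / Fintype.card V) ^ 2 := by
    intro v
    unfold centeredIndicator
    split_ifs <;> ring
  simp only [hpoint, sum_add_distrib, ← sum_mul, sum_ite_mem, univ_inter, sum_const, card_univ,
    nsmul_eq_mul, mul_one]
  field_simp
  ring

end CenteredIndicator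

namespace SimpleGraph

variable {V : Type*} [Fintype V] [DecidableEq V] {G : SimpleGraph V} [DecidableRel G.Adj]
  {d : ℕ}

lemma adjMatrix_mulVec_centeredIndicator (hreg : G.IsRegularOfDegree d) (B : Finset V)
    (v : V) : (G.adjMatrix ℝ).mulVec (centeredIndicator B) v =
      #(G.neighborFinset v ∩ B) - d * (#B / Fintype.card V) := by
  simp only [adjMatrix_mulVec_apply, centeredIndicator, sum_sub_distrib, sum_ite_mem, sum_const,
    nsmul_eq_mul, mul_one, card_neighborFinset_eq_degree, hreg v]

theorem sq_lt_of_forall_card_neighborFinset_inter_add_lt {r c : ℝ}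
    (hreg : G.IsRegularOfDegree d)
    (hspec : ∀ x : V → ℝ, ∑ v, x v = 0 →
      √(∑ v, ((G.adjMatrix ℝ).mulVec x v) ^ 2) ≤ r * √(∑ v, x v ^ 2))
    {B : Finset V} (hB : B.Nonempty) (hc : 0 ≤ c)
    (hdeficit : ∀ v ∈ B, #(G.neighborFinset v ∩ B) + c < d * (#B / Fintype.card V)) :
    c ^ 2 < r ^ 2 * (1 - #B / Fintype.card V) := by
  set y := (G.adjMatrix ℝ).mulVec (centeredIndicator B)
  have hy : ∑ v, y v ^ 2 ≤ r ^ 2 * (#B * (1 - #B / Fintype.card V)) := by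
    have h := pow_le_pow_left₀ (Real.sqrt_nonneg _) (hspec _ (sum_centeredIndicator B)) 2
    rwa [mul_pow, Real.sq_sqrt (by positivity), Real.sq_sqrt (by positivity),
      sum_sq_centeredIndicator] at h
  have hlt : ∀ v ∈ B, c ^ 2 < y v ^ 2 := by
    intro v hv
    have hyv : y v = _ := adjMatrix_mulVec_centeredIndicator hreg B v
    nlinarith [hdeficit v hv]
  have hBpos : (0 : ℝ) < #B := by exact_mod_cast hB.card_pos
  refine lt_of_mul_lt_mul_left ?_ hBpos.le
  calc #B * c ^ 2 = ∑ v ∈ B, c ^ 2 := by rw [sum_const, nsmul_eq_mul]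
    _ < ∑ v ∈ B, y v ^ 2 := sum_lt_sum_of_nonempty hB hlt
    _ ≤ ∑ v, y v ^ 2 := sum_le_univ_sum_of_nonneg fun _ ↦ sq_nonneg _
    _ ≤ r ^ 2 * (#B * (1 - #B / Fintype.card V)) := hy
    _ = #B * (r ^ 2 * (1 - #B / Fintype.card V)) := by ring

end SimpleGraph

open scoped Classical in
/-- in an `(n,d)`-Ramanujan graph with `n ≥ 1`, `d ≥ 2`, for every vertex
set `X` there are fewer than `n·d^{-1/8}` vertices of `X` having fewer than `δ(d)`
neighbors in `X`. -/
theorem ramanujan_few_bad_vertices {V : Type*} [Fintype V] [DecidableEq V]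
    (n d : ℕ) (hn : 1 ≤ n) (hd : 2 ≤ d)
    (G : SimpleGraph V) [DecidableRel G.Adj] (hG : IsRamanujan n d G)
    (X : Finset V) :
    ((X.filter fun v => ((G.neighborFinset v ∩ X).card : ℝ) < deltaOf d).card : ℝ) <
      (n : ℝ) * (d : ℝ) ^ (-(1 / 8 : ℝ)) := by
  obtain ⟨hcard, hreg, hspec⟩ := hG
  set t : ℝ := (d : ℝ) ^ (8⁻¹ : ℝ)
  have hd1 : (1 : ℝ) ≤ d := by exact_mod_cast one_le_two.trans hd
  have ht : 1 ≤ t := Real.one_le_rpow hd1 (by norm_num)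
  have hdt : (d : ℝ) = t ^ 8 := (Real.rpow_inv_natCast_pow d.cast_nonneg (by norm_num)).symm
  rw [show -(1 / 8 : ℝ) = -8⁻¹ by norm_num, Real.rpow_neg d.cast_nonneg, deltaOf_eq]
  set B := X.filter fun v => ((G.neighborFinset v ∩ X).card : ℝ) < (t ^ 7 - t ^ 5) / 2
  by_contra! hBlarge
  have hfrac : t⁻¹ ≤ #B / n := by rwa [le_div_iff₀ (by exact_mod_cast hn), mul_comm]
  have hB : B.Nonempty :=
    card_pos.1 (Nat.cast_pos.1 ((by positivity : (0 : ℝ) < n * t⁻¹).trans_le hBlarge))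
  have hdB : t ^ 7 ≤ d * (#B / Fintype.card V) := by
    rw [hcard, hdt]
    calc t ^ 7 = t ^ 8 * t⁻¹ := by field_simp
      _ ≤ t ^ 8 * (#B / n) := by gcongr
  have hdeficit : ∀ v ∈ B,
      #(G.neighborFinset v ∩ B) + (t ^ 7 + t ^ 5) / 2 < d * (#B / Fintype.card V) := by
    intro v hv
    have hvX : (#(G.neighborFinset v ∩ X) : ℝ) < (t ^ 7 - t ^ 5) / 2 := (mem_filter.1 hv).2
    have hBX : (#(G.neighborFinset v ∩ B) : ℝ) ≤ #(G.neighborFinset v ∩ X) := by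
      exact_mod_cast card_le_card (inter_subset_inter_left (filter_subset _ X))
    linarith
  have hsq := G.sq_lt_of_forall_card_neighborFinset_inter_add_lt hreg hspec hB
    (by positivity) hdeficit
  rw [mul_pow, Real.sq_sqrt (sub_nonneg.2 hd1), hcard] at hsq
  have hpoly := four_mul_pow_eight_sub_one_mul_one_sub_inv_le ht
  rw [← hdt] at hpoly
  nlinarith [mul_nonneg (sub_nonneg.2 hd1) (sub_nonneg.2 hfrac)]
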